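/- arXiv:1608.02432 — 7 statements merged into one kernel-verified Lean document; each statement's English description precedes it below -/
import Mathlib

section
/- Let O and O' be points of the Euclidean plane EuclideanSpace ℝ (Fin 2) with x = dist O O' satisfying 0 < x ≤ 2r for some r > 0. Then the intersection of the closed balls of radius r centered at O and at O' is contained in the closed ball of radius √(r² − x²/4) centered at the midpoint of O and O', and moreover √(r² − x²/4) < r. -/
open Metric

/-- By Apollonius' theorem, `2 d(p, m)² + d(a, b)² / 2 = d(p, a)² + d(p, b)² ≤ 2 r²`,
where `m` is the midpoint of `a` and `b`. -/
theorem dist_midpoint_sq_le_of_dist_le {V P : Type*} [NormedAddCommGroup V]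
    [InnerProductSpace ℝ V] [MetricSpace P] [NormedAddTorsor V P] {p a b : P} {r : ℝ}
    (ha : dist p a ≤ r) (hb : dist p b ≤ r) :
    dist p (midpoint ℝ a b) ^ 2 ≤ r ^ 2 - dist a b ^ 2 / 4 := by
  have apollonius :=
    EuclideanGeometry.dist_sq_add_dist_sq_eq_two_mul_dist_midpoint_sq_add_half_dist_sq p a b
  have ha' : dist p a ^ 2 ≤ r ^ 2 := pow_le_pow_left₀ dist_nonneg ha 2
  have hb' : dist p b ^ 2 ≤ r ^ 2 := pow_le_pow_left₀ dist_nonneg hb 2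
  linarith

theorem closedBall_inter_closedBall_subset_closedBall_midpoint {V P : Type*}
    [NormedAddCommGroup V] [InnerProductSpace ℝ V] [MetricSpace P] [NormedAddTorsor V P]
    (a b : P) (r : ℝ) :
    closedBall a r ∩ closedBall b r ⊆
      closedBall (midpoint ℝ a b) (Real.sqrt (r ^ 2 - dist a b ^ 2 / 4)) := fun _ ⟨ha, hb⟩ =>
  Real.le_sqrt_of_sq_le (dist_midpoint_sq_le_of_dist_le ha hb)

theorem disk_intersection_in_smaller_disk_general
    (O O' : EuclideanSpace ℝ (Fin 2)) (r x : ℝ) (hr : 0 < r)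
    (hx : x = dist O O') (hx0 : 0 < x) :
    closedBall O r ∩ closedBall O' r ⊆
      closedBall (midpoint ℝ O O') (Real.sqrt (r ^ 2 - x ^ 2 / 4)) ∧
    Real.sqrt (r ^ 2 - x ^ 2 / 4) < r := by
  subst hx
  refine ⟨closedBall_inter_closedBall_subset_closedBall_midpoint O O' r, ?_⟩
  rw [Real.sqrt_lt' hr]
  linarith [pow_pos hx0 2]

theorem disk_intersection_in_smaller_disk
    (O O' : EuclideanSpace ℝ (Fin 2)) (r x : ℝ) (hr : 0 < r)
    (hx : x = dist O O') (hx0 : 0 < x) (hx2r : x ≤ 2 * r) :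
    closedBall O r ∩ closedBall O' r ⊆
      closedBall (midpoint ℝ O O') (Real.sqrt (r ^ 2 - x ^ 2 / 4)) ∧
    Real.sqrt (r ^ 2 - x ^ 2 / 4) < r :=
  disk_intersection_in_smaller_disk_general O O' r x hr hx hx0
end

section
/- Let S be a set of points of the Euclidean plane EuclideanSpace ℝ (Fin 2), r > 0, and let O ≠ O' be two distinct points such that S is contained in the closed ball of radius r centered at O and also in the closed ball of radius r centered at O'. Then there exist a point c and a radius ρ < r such that S is contained in the closed ball of radius ρ centered at c. -/
/-!
By Apollonius's theorem, a point within distance `r` of both `O` and `O'` lies within distance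
`√(r² - (|OO'|/2)²)` of the midpoint of `OO'`, and this radius is smaller than `r` once `O ≠ O'`.
-/

open Metric

namespace EuclideanGeometry

variable {V P : Type*} [NormedAddCommGroup V] [InnerProductSpace ℝ V] [MetricSpace P]
  [NormedAddTorsor V P]

theorem closedBall_inter_closedBall_subset_closedBall_midpoint (O O' : P) (r : ℝ) :
    closedBall O r ∩ closedBall O' r ⊆
      closedBall (midpoint ℝ O O') (√(r ^ 2 - (dist O O' / 2) ^ 2)) := by
  rintro x ⟨hxO, hxO'⟩
  rw [mem_closedBall] at hxO hxO' ⊢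
  have hxO_sq : dist x O ^ 2 ≤ r ^ 2 := pow_le_pow_left₀ dist_nonneg hxO 2
  have hxO'_sq : dist x O' ^ 2 ≤ r ^ 2 := pow_le_pow_left₀ dist_nonneg hxO' 2
  have apollonius := dist_sq_add_dist_sq_eq_two_mul_dist_midpoint_sq_add_half_dist_sq x O O'
  exact Real.le_sqrt_of_sq_le (by linarith)

end EuclideanGeometry

theorem smaller_enclosing_ball_of_two_centers
    (S : Set (EuclideanSpace ℝ (Fin 2))) (r : ℝ) (hr : 0 < r)
    (O O' : EuclideanSpace ℝ (Fin 2)) (hOO' : O ≠ O')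
    (hSO : S ⊆ closedBall O r) (hSO' : S ⊆ closedBall O' r) :
    ∃ (c : EuclideanSpace ℝ (Fin 2)) (ρ : ℝ), ρ < r ∧ S ⊆ closedBall c ρ := by
  refine ⟨midpoint ℝ O O', √(r ^ 2 - (dist O O' / 2) ^ 2), ?_, ?_⟩
  · rw [Real.sqrt_lt' hr]
    exact sub_lt_self _ (pow_pos (half_pos (dist_pos.2 hOO')) 2)
  · exact (Set.subset_inter hSO hSO').trans
      (EuclideanGeometry.closedBall_inter_closedBall_subset_closedBall_midpoint O O' r)
end

section
/- Let S be a nonempty finite set of points in the Euclidean plane EuclideanSpace ℝ (Fin 2), and for a point c let f(c) = max_{p ∈ S} dist c p denote the covering radius of S at c. If c and c' are two points such that f(c) ≤ f(c'') and f(c') ≤ f(c'') for every point c'', then c = c'. That is, the center of the smallest enclosing circle of S is unique. -/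
/-!
A closed ball in a strictly convex space contains the open segment between two of its distinct
points in its interior. So if `c ≠ c'` both had minimal covering radius `r`, every point of `S`
would lie at distance `< r` from the midpoint of `c` and `c'`, whose covering radius would then be
smaller than `r`.
-/

open Metric

variable {E : Type*} [NormedAddCommGroup E] [NormedSpace ℝ E] [StrictConvexSpace ℝ E]

theorem dist_midpoint_lt_of_ne {c c' p : E} {r : ℝ} (hne : c ≠ c')
    (hc : dist c p ≤ r) (hc' : dist c' p ≤ r) : dist (midpoint ℝ c c') p < r :=
  mem_ball.mp <| openSegment_subset_ball_of_ne (mem_closedBall.mpr hc) (mem_closedBall.mpr hc')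
    hne (midpoint_mem_openSegment c c')

theorem Finset.sup'_dist_midpoint_lt_of_ne (S : Finset E) (hS : S.Nonempty) {c c' : E} {r : ℝ}
    (hne : c ≠ c') (hc : S.sup' hS (dist c ·) ≤ r) (hc' : S.sup' hS (dist c' ·) ≤ r) :
    S.sup' hS (dist (midpoint ℝ c c') ·) < r :=
  (S.sup'_lt_iff hS).mpr fun p hp =>
    dist_midpoint_lt_of_ne hne ((S.sup'_le_iff hS _).mp hc p hp) ((S.sup'_le_iff hS _).mp hc' p hp)

theorem sec_center_unique
    (S : Finset (EuclideanSpace ℝ (Fin 2))) (hS : S.Nonempty)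
    (c c' : EuclideanSpace ℝ (Fin 2))
    (hc : ∀ c'' : EuclideanSpace ℝ (Fin 2),
        S.sup' hS (fun p => dist c p) ≤ S.sup' hS (fun p => dist c'' p))
    (hc' : ∀ c'' : EuclideanSpace ℝ (Fin 2),
        S.sup' hS (fun p => dist c' p) ≤ S.sup' hS (fun p => dist c'' p)) :
    c = c' := by
  by_contra hne
  have hlt := S.sup'_dist_midpoint_lt_of_ne hS hne le_rfl (hc' c)
  exact (hc (midpoint ℝ c c')).not_gt hlt
end

section
/- Let r and δ be real numbers with 0 < δ ≤ r, and let x ≥ 0 satisfy r² − x² = (r − δ + x)². Then x = (√((r+δ)² − 2δ²) − (r − δ))/2; consequently δ − x = (r+δ)/2 − (1/2)·√((r+δ)² − 2δ²) and δ − x > 0, so that r − δ + x = (r−δ)/2 + (1/2)·√((r+δ)² − 2δ²) < r. -/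
/-!
Completing the square turns the relation into `(2x + (r − δ))² = (r + δ)² − 2δ²`, so the square
root is `2x + (r − δ)`, which is nonnegative as `x ≥ 0` and `δ ≤ r`. Since `δ > 0`, the right-hand side is
strictly below `(r + δ)²`, whence `2x + (r − δ) < r + δ`, i.e. `x < δ`.
-/

theorem two_mul_add_sub_sq_eq_of_sq_sub_sq_eq {r δ x : ℝ}
    (heq : r ^ 2 - x ^ 2 = (r - δ + x) ^ 2) :
    (2 * x + (r - δ)) ^ 2 = (r + δ) ^ 2 - 2 * δ ^ 2 := by
  linear_combination (-2) * heq

theorem sqrt_eq_two_mul_add_sub_of_sq_sub_sq_eq {r δ x : ℝ} (hδr : δ ≤ r) (hx : 0 ≤ x)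
    (heq : r ^ 2 - x ^ 2 = (r - δ + x) ^ 2) :
    Real.sqrt ((r + δ) ^ 2 - 2 * δ ^ 2) = 2 * x + (r - δ) := by
  rw [← two_mul_add_sub_sq_eq_of_sq_sub_sq_eq heq, Real.sqrt_sq (by linarith)]

theorem lt_of_sq_sub_sq_eq {r δ x : ℝ} (hδ : 0 < δ) (hδr : δ ≤ r)
    (heq : r ^ 2 - x ^ 2 = (r - δ + x) ^ 2) :
    x < δ := by
  have hsq : (2 * x + (r - δ)) ^ 2 < (r + δ) ^ 2 := by
    rw [two_mul_add_sub_sq_eq_of_sq_sub_sq_eq heq]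
    nlinarith
  have hlt : 2 * x + (r - δ) < r + δ := lt_of_pow_lt_pow_left₀ 2 (by linarith) hsq
  linarith

theorem lemma_del2_algebra
    (r δ x : ℝ) (hδ : 0 < δ) (hδr : δ ≤ r) (hx : 0 ≤ x)
    (heq : r ^ 2 - x ^ 2 = (r - δ + x) ^ 2) :
    x = (Real.sqrt ((r + δ) ^ 2 - 2 * δ ^ 2) - (r - δ)) / 2 ∧
    δ - x = (r + δ) / 2 - (1 / 2) * Real.sqrt ((r + δ) ^ 2 - 2 * δ ^ 2) ∧
    δ - x > 0 ∧
    r - δ + x = (r - δ) / 2 + (1 / 2) * Real.sqrt ((r + δ) ^ 2 - 2 * δ ^ 2) ∧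
    r - δ + x < r := by
  have hsqrt := sqrt_eq_two_mul_add_sub_of_sq_sub_sq_eq hδr hx heq
  have hxδ := lt_of_sq_sub_sq_eq hδ hδr heq
  refine ⟨?_, ?_, ?_, ?_, ?_⟩ <;> first | (rw [hsqrt]; ring) | linarith
end

section
/- Let O be a point of the Euclidean plane EuclideanSpace ℝ (Fin 2), r > 0, and let p₁, p₂, p₃ be three points on the sphere of radius r centered at O such that O lies in the convex hull of {p₁, p₂, p₃}. Then for every point c and every radius r' such that p₁, p₂, p₃ all lie in the closed ball of radius r' centered at c, one has r ≤ r'. That is, the circle through the three points is their smallest enclosing circle. -/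
open Metric

/-!
Some vertex `p` lies in the closed half-plane through `O` facing away from `c`, because a linear
functional attains its minimum over a convex hull at a generating point. Then `p - O` and `c - O`
make an obtuse angle, so `r = dist p O ≤ dist p c ≤ r'`.
-/

section

variable {E : Type*} [NormedAddCommGroup E] [InnerProductSpace ℝ E]

open RealInnerProductSpace

theorem dist_le_dist_of_inner_sub_nonpos {x y c : E} (h : ⟪y - x, c - x⟫ ≤ 0) :
    dist y x ≤ dist y c := by
  rw [dist_eq_norm, dist_eq_norm, show y - c = (y - x) - (c - x) by abel]
  refine (sq_le_sq₀ (norm_nonneg _) (norm_nonneg _)).mp ?_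
  rw [norm_sub_sq_real (y - x)]
  linarith [sq_nonneg ‖c - x‖]

theorem exists_inner_sub_nonpos_of_mem_convexHull {s : Set E} {x : E} (hx : x ∈ convexHull ℝ s)
    (v : E) : ∃ y ∈ s, ⟪y - x, v⟫ ≤ 0 := by
  obtain ⟨y, hy, hle⟩ :=
    ((innerₛₗ ℝ).flip v).concaveOn convex_univ |>.exists_le_of_mem_convexHull (Set.subset_univ s) hx
  exact ⟨y, hy, by simpa [inner_sub_left] using hle⟩

theorem exists_dist_le_dist_of_mem_convexHull {s : Set E} {x : E} (hx : x ∈ convexHull ℝ s)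
    (c : E) : ∃ y ∈ s, dist y x ≤ dist y c :=
  let ⟨y, hy, hinner⟩ := exists_inner_sub_nonpos_of_mem_convexHull hx (c - x)
  ⟨y, hy, dist_le_dist_of_inner_sub_nonpos hinner⟩

end

theorem three_points_sec_general
    (O : EuclideanSpace ℝ (Fin 2)) (r : ℝ)
    (p₁ p₂ p₃ : EuclideanSpace ℝ (Fin 2))
    (h₁ : p₁ ∈ sphere O r) (h₂ : p₂ ∈ sphere O r) (h₃ : p₃ ∈ sphere O r)
    (hO : O ∈ convexHull ℝ ({p₁, p₂, p₃} : Set (EuclideanSpace ℝ (Fin 2)))) :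
    ∀ (c : EuclideanSpace ℝ (Fin 2)) (r' : ℝ),
      p₁ ∈ closedBall c r' → p₂ ∈ closedBall c r' → p₃ ∈ closedBall c r' →
      r ≤ r' := by
  intro c r' hc₁ hc₂ hc₃
  obtain ⟨p, hp, hle⟩ := exists_dist_le_dist_of_mem_convexHull hO c
  have ⟨hpO, hpc⟩ : p ∈ sphere O r ∧ p ∈ closedBall c r' := by
    rcases hp with rfl | rfl | rfl
    exacts [⟨h₁, hc₁⟩, ⟨h₂, hc₂⟩, ⟨h₃, hc₃⟩]
  calc r = dist p O := (mem_sphere.mp hpO).symm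
    _ ≤ dist p c := hle
    _ ≤ r' := mem_closedBall.mp hpc

theorem three_points_sec
    (O : EuclideanSpace ℝ (Fin 2)) (r : ℝ) (hr : 0 < r)
    (p₁ p₂ p₃ : EuclideanSpace ℝ (Fin 2))
    (h₁ : p₁ ∈ sphere O r) (h₂ : p₂ ∈ sphere O r) (h₃ : p₃ ∈ sphere O r)
    (hO : O ∈ convexHull ℝ ({p₁, p₂, p₃} : Set (EuclideanSpace ℝ (Fin 2)))) :
    ∀ (c : EuclideanSpace ℝ (Fin 2)) (r' : ℝ),
      p₁ ∈ closedBall c r' → p₂ ∈ closedBall c r' → p₃ ∈ closedBall c r' →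
      r ≤ r' :=
  three_points_sec_general O r p₁ p₂ p₃ h₁ h₂ h₃ hO
end

section
/- Let O be a point of the Euclidean plane EuclideanSpace ℝ (Fin 2), r > 0, and let S be a finite set contained in the closed ball of radius r centered at O. If O does NOT lie in the convex hull of S ∩ sphere O r, then there exist a point c and a radius ρ < r such that S is contained in the closed ball of radius ρ centered at c. -/
open Metric Filter Topology RealInnerProductSpace

/-!
A hyperplane through `O` separates `O` from the boundary points `S ∩ sphere O r`, with those
points strictly on the side of a normal vector `v`. Moving the centre from `O` a little in the
direction of `v` brings every boundary point strictly inside the circle of radius `r`, and by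
continuity the interior points stay inside; since `S` is finite, one small step works for all
points at once, and then a slightly smaller radius still encloses `S`.
-/

section InnerProductSpace

variable {E : Type*} [NormedAddCommGroup E] [InnerProductSpace ℝ E]

theorem eventually_dist_add_smul_lt {x O v : E} (h : 0 < ⟪x - O, v⟫) :
    ∀ᶠ t in 𝓝[>] (0 : ℝ), dist x (O + t • v) < dist x O := by
  have hsmall : ∀ᶠ t in 𝓝 (0 : ℝ), t * ‖v‖ ^ 2 < 2 * ⟪x - O, v⟫ :=
    (continuous_id.mul continuous_const).tendsto' 0 0 (zero_mul _) |>.eventually_lt_const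
      (by linarith)
  filter_upwards [self_mem_nhdsWithin, nhdsWithin_le_nhds hsmall] with t (ht : 0 < t) hsmall
  -- `‖(x - O) - t v‖² = ‖x - O‖² - t (2 ⟪x - O, v⟫ - t ‖v‖²)`
  have hsq : dist x (O + t • v) ^ 2 < dist x O ^ 2 := by
    rw [dist_eq_norm, dist_eq_norm, sub_add_eq_sub_sub, norm_sub_sq_real, inner_smul_right,
      norm_smul, Real.norm_of_nonneg ht.le]
    nlinarith
  exact lt_of_pow_lt_pow_left₀ 2 dist_nonneg hsq

theorem exists_inner_sub_pos_of_notMem_convexHull [CompleteSpace E] {B : Set E} (hB : B.Finite)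
    {O : E} (hO : O ∉ convexHull ℝ B) : ∃ v : E, ∀ x ∈ B, 0 < ⟪x - O, v⟫ := by
  obtain ⟨f, u, hfO, hfB⟩ := geometric_hahn_banach_point_closed (convex_convexHull ℝ B)
    (hB.isCompact_convexHull ℝ).isClosed hO
  refine ⟨(InnerProductSpace.toDual ℝ E).symm f, fun x hx => ?_⟩
  rw [real_inner_comm, InnerProductSpace.toDual_symm_apply, map_sub]
  linarith [hfB x (subset_convexHull ℝ B hx)]

theorem exists_subset_ball_of_notMem_convexHull [CompleteSpace E] {S : Set E} (hS : S.Finite)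
    {O : E} {r : ℝ} (hSr : S ⊆ closedBall O r) (hO : O ∉ convexHull ℝ (S ∩ sphere O r)) :
    ∃ c : E, S ⊆ ball c r := by
  obtain ⟨v, hv⟩ := exists_inner_sub_pos_of_notMem_convexHull (hS.inter_of_left _) hO
  have hmove : ∀ x ∈ S, ∀ᶠ t in 𝓝[>] (0 : ℝ), dist x (O + t • v) < r := by
    intro x hx
    rcases (mem_closedBall.mp (hSr hx)).lt_or_eq with hlt | heq
    · have hcont : Continuous fun t : ℝ => dist x (O + t • v) := by fun_prop
      exact nhdsWithin_le_nhds <| hcont.tendsto' 0 _ (by simp) |>.eventually_lt_const hlt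
    · exact heq ▸ eventually_dist_add_smul_lt (hv x ⟨hx, mem_sphere.mpr heq⟩)
  obtain ⟨t, ht⟩ := ((eventually_all_finite hS).mpr hmove).exists
  exact ⟨O + t • v, fun x hx => mem_ball.mpr (ht x hx)⟩

end InnerProductSpace

theorem smaller_ball_of_center_not_in_hull_general
    (O : EuclideanSpace ℝ (Fin 2)) (r : ℝ)
    (S : Set (EuclideanSpace ℝ (Fin 2))) (hfin : S.Finite)
    (hS : S ⊆ closedBall O r)
    (hO : O ∉ convexHull ℝ (S ∩ sphere O r)) :
    ∃ (c : EuclideanSpace ℝ (Fin 2)) (ρ : ℝ), ρ < r ∧ S ⊆ closedBall c ρ := by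
  obtain ⟨c, hc⟩ := exists_subset_ball_of_notMem_convexHull hfin hS hO
  obtain ⟨ρ, hρ, hρc⟩ := exists_lt_subset_ball hfin.isClosed hc
  exact ⟨c, ρ, hρ, hρc.trans ball_subset_closedBall⟩

theorem smaller_ball_of_center_not_in_hull
    (O : EuclideanSpace ℝ (Fin 2)) (r : ℝ) (hr : 0 < r)
    (S : Set (EuclideanSpace ℝ (Fin 2))) (hfin : S.Finite)
    (hS : S ⊆ closedBall O r)
    (hO : O ∉ convexHull ℝ (S ∩ sphere O r)) :
    ∃ (c : EuclideanSpace ℝ (Fin 2)) (ρ : ℝ), ρ < r ∧ S ⊆ closedBall c ρ :=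
  smaller_ball_of_center_not_in_hull_general O r S hfin hS hO
end

section
/- Let O be a point of the Euclidean plane EuclideanSpace ℝ (Fin 2), r > 0, and let S be a finite set of points on the sphere of radius r centered at O such that O lies in the convex hull of S. Then either there exist p, q ∈ S with O = midpoint p q (two points of S forming a diameter), or there exist p, q, s ∈ S such that O lies in the interior of the convex hull of {p, q, s} (three points of S not lying on a common semicircle). -/
/-!
By Carathéodory's theorem, `O` is a convex combination with positive weights of affinely
independent points of `S`; in the plane there are at most three of them. A single point would
be `O` itself, which is not on the circle. Two points equidistant from `O` with `O` on the
segment between them have `O` as their midpoint. Three affinely independent points form an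
affine basis of the plane, and positive barycentric coordinates put `O` in the interior of
their triangle.
-/

open Metric Set Module

theorem exists_fin_pos_convex_span_of_mem_convexHull {𝕜 E : Type*} [Field 𝕜] [LinearOrder 𝕜]
    [IsStrictOrderedRing 𝕜] [AddCommGroup E] [Module 𝕜 E] {s : Set E} {x : E}
    (hx : x ∈ convexHull 𝕜 s) :
    ∃ (n : ℕ) (z : Fin n → E) (w : Fin n → 𝕜), range z ⊆ s ∧ AffineIndependent 𝕜 z ∧
      (∀ i, 0 < w i) ∧ ∑ i, w i = 1 ∧ ∑ i, w i • z i = x := by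
  obtain ⟨ι, _, z, w, hzs, hz, hw, hw1, hwx⟩ := eq_pos_convex_span_of_mem_convexHull hx
  let e := (Fintype.equivFin ι).symm
  refine ⟨_, z ∘ e, w ∘ e, ?_, hz.comp_embedding e.toEmbedding, fun i => hw _,
    (e.sum_comp w).trans hw1, (e.sum_comp fun i => w i • z i).trans hwx⟩
  rwa [e.surjective.range_comp]

theorem eq_midpoint_of_smul_add_smul_of_dist_eq {E : Type*} [NormedAddCommGroup E]
    [NormedSpace ℝ E] {x y O : E} {a b : ℝ} (hab : a + b = 1) (hO : a • x + b • y = O)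
    (hxy : x ≠ y) (hdist : dist x O = dist y O) : O = midpoint ℝ x y := by
  obtain rfl : a = 1 - b := by linarith
  have hx : x - O = b • (x - y) := by rw [← hO]; module
  have hy : y - O = (1 - b) • (y - x) := by rw [← hO]; module
  have habs : |b| = |1 - b| := by
    rw [dist_eq_norm, dist_eq_norm, hx, hy, norm_smul, norm_smul, norm_sub_rev y x,
      Real.norm_eq_abs, Real.norm_eq_abs] at hdist
    exact mul_right_cancel₀ (norm_pos_iff.mpr (sub_ne_zero.mpr hxy)).ne' hdist
  obtain rfl : b = 1 / 2 := by rcases abs_eq_abs.mp habs with h | h <;> linarith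
  rw [← hO, midpoint_eq_smul_add, smul_add]
  norm_num

theorem AffineIndependent.sum_smul_mem_interior_convexHull {ι E : Type*} [Fintype ι]
    [NormedAddCommGroup E] [NormedSpace ℝ E] [FiniteDimensional ℝ E] {z : ι → E} {w : ι → ℝ}
    (hz : AffineIndependent ℝ z) (hcard : Fintype.card ι = finrank ℝ E + 1)
    (hw : ∀ i, 0 < w i) (hw1 : ∑ i, w i = 1) :
    ∑ i, w i • z i ∈ interior (convexHull ℝ (range z)) := by
  let b : AffineBasis ι ℝ E :=
    ⟨z, hz, hz.affineSpan_eq_top_iff_card_eq_finrank_add_one.mpr hcard⟩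
  rw [← Finset.affineCombination_eq_linear_combination _ _ _ hw1]
  change _ ∈ interior (convexHull ℝ (range b))
  rw [b.interior_convexHull]
  intro i
  change 0 < b.coord i (Finset.univ.affineCombination ℝ b w)
  rw [b.coord_apply_combination_of_mem (Finset.mem_univ i) hw1]
  exact hw i

theorem diameter_or_three_points_not_on_semicircle_general
    (O : EuclideanSpace ℝ (Fin 2)) (r : ℝ) (hr : 0 < r)
    (S : Set (EuclideanSpace ℝ (Fin 2)))
    (hsphere : S ⊆ sphere O r)
    (hO : O ∈ convexHull ℝ S) :
    (∃ p ∈ S, ∃ q ∈ S, O = midpoint ℝ p q) ∨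
    (∃ p ∈ S, ∃ q ∈ S, ∃ s ∈ S,
        O ∈ interior (convexHull ℝ ({p, q, s} : Set (EuclideanSpace ℝ (Fin 2))))) := by
  obtain ⟨n, z, w, hzS, hz, hw, hw1, hwO⟩ := exists_fin_pos_convex_span_of_mem_convexHull hO
  have hzS' (i : Fin n) : z i ∈ S := hzS (mem_range_self i)
  have hzO (i : Fin n) : dist (z i) O = r := hsphere (hzS' i)
  have hn : n ≤ 3 := by
    simpa using hz.card_le_finrank_succ.trans (Nat.succ_le_succ (Submodule.finrank_le _))
  interval_cases n
  · simp at hw1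
  · rw [Fin.sum_univ_one] at hw1 hwO
    rw [hw1, one_smul] at hwO
    have h0 := hzO 0
    rw [hwO, dist_self] at h0
    exact absurd h0 hr.ne
  · left
    rw [Fin.sum_univ_two] at hw1 hwO
    exact ⟨z 0, hzS' 0, z 1, hzS' 1, eq_midpoint_of_smul_add_smul_of_dist_eq hw1 hwO
      (hz.injective.ne (by decide)) ((hzO 0).trans (hzO 1).symm)⟩
  · right
    have hrange : range z = {z 0, z 1, z 2} := by
      ext; simp [Fin.exists_fin_succ, eq_comm]
    refine ⟨z 0, hzS' 0, z 1, hzS' 1, z 2, hzS' 2, ?_⟩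
    rw [← hrange, ← hwO]
    exact hz.sum_smul_mem_interior_convexHull (by simp) hw hw1

theorem diameter_or_three_points_not_on_semicircle
    (O : EuclideanSpace ℝ (Fin 2)) (r : ℝ) (hr : 0 < r)
    (S : Set (EuclideanSpace ℝ (Fin 2))) (hfin : S.Finite)
    (hsphere : S ⊆ sphere O r)
    (hO : O ∈ convexHull ℝ S) :
    (∃ p ∈ S, ∃ q ∈ S, O = midpoint ℝ p q) ∨
    (∃ p ∈ S, ∃ q ∈ S, ∃ s ∈ S,
        O ∈ interior (convexHull ℝ ({p, q, s} : Set (EuclideanSpace ℝ (Fin 2))))) :=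
  diameter_or_three_points_not_on_semicircle_general O r hr S hsphere hO
end
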